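/- For the DPKdV equation (t_{uv} - t)(t_u - t_v) = 1, each coefficient n_{k,j} (k, j ≥ 1) of the characteristic vector field X_k is a polynomial in the variables x^i_l = \bar{D}^{-i}D^l x of the form n_{k,j} = m_{k,j} x^k_{j-1} + r_{k,j}, where m_{k,j} is a nonzero monomial and r_{k,j} a polynomial in variables of strictly lower order (order defined by ord(x^n_j) > ord(x^n_p) if j > p and ord(x^m_j) > ord(x^n_p) if m > n); consequently the vector fields X_1, X_2, X_3, ... are linearly independent and the characteristic Lie algebra is infinite-dimensional. -/

import Mathlib

/-!
Order the variables `xⁱ_l` lexicographically in `(i, l)`. The coefficients `n_{1,j+1} = x¹_0⋯x¹_j`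
have leading variable `x¹_j`, and the recursion propagates this: `D̄⁻¹` shifts the leading monomial
of `n_{k,j+1}` to one in `x^{k+1}_j`, multiplied by `-x¹_j`, while `D̄⁻¹n_{k,j}` and `x¹_j n_{k+1,j}`
involve only lower variables by induction on `k` and `j`. Hence the coefficient of the leading
monomial of `n_{K,1}` vanishes on every `n_{k,1}` with `k < K`, which makes the fields `X_k`
triangular, hence linearly independent.
-/

open MvPolynomial

section LinearIndependent

variable {ι R M : Type*} [LinearOrder ι] [CommRing R] [NoZeroDivisors R] [AddCommGroup M]
  [Module R M]

theorem linearIndependent_of_triangular {v : ι → M}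
    (h : ∀ i, ∃ φ : M →ₗ[R] R, φ (v i) ≠ 0 ∧ ∀ j < i, φ (v j) = 0) :
    LinearIndependent R v := by
  classical
  rw [linearIndependent_iff']
  intro s g hsum i hi
  by_contra hgi
  have hne : (s.filter fun b => g b ≠ 0).Nonempty := ⟨i, Finset.mem_filter.mpr ⟨hi, hgi⟩⟩
  set K := (s.filter fun b => g b ≠ 0).max' hne
  obtain ⟨hKs, hgK⟩ := Finset.mem_filter.mp ((s.filter fun b => g b ≠ 0).max'_mem hne)
  obtain ⟨φ, hφK, hφlt⟩ := h K
  have hφsum : ∑ b ∈ s, g b * φ (v b) = g K * φ (v K) := by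
    refine Finset.sum_eq_single K (fun b hb hbK => ?_) (absurd hKs)
    by_cases hgb : g b = 0
    · rw [hgb, zero_mul]
    · have hbK' : b < K :=
        lt_of_le_of_ne (Finset.le_max' _ b (Finset.mem_filter.mpr ⟨hb, hgb⟩)) hbK
      rw [hφlt b hbK', mul_zero]
  have hzero : g K * φ (v K) = 0 := by
    simpa [map_sum, hφsum] using congrArg φ hsum
  exact mul_ne_zero hgK hφK hzero

end LinearIndependent

namespace MvPolynomial

variable {R : Type*} [CommRing R]

def VarsBelow (p : MvPolynomial (ℕ × ℕ) R) (v : ℕ × ℕ) : Prop :=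
  ∀ w ∈ p.vars, toLex w < toLex v

/-- The paper's `p = m·v + r`, with `m` a nonzero monomial and `r` a polynomial, both in variables
of lower order than `v`; variable `(i, l)` stands for `xⁱ_l`. -/
def HasLeadingVar (p : MvPolynomial (ℕ × ℕ) R) (v : ℕ × ℕ) : Prop :=
  ∃ (c : R) (s : (ℕ × ℕ) →₀ ℕ) (r : MvPolynomial (ℕ × ℕ) R),
    c ≠ 0 ∧ p = monomial s c * X v + r ∧ (∀ w ∈ s.support, toLex w < toLex v) ∧ VarsBelow r v

theorem toLex_shift_lt_shift {w v : ℕ × ℕ} (h : toLex w < toLex v) :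
    toLex (w.1 + 1, w.2) < toLex (v.1 + 1, v.2) := by
  simp only [Prod.Lex.toLex_lt_toLex] at h ⊢
  omega

namespace VarsBelow

variable {p q : MvPolynomial (ℕ × ℕ) R} {v : ℕ × ℕ}

theorem of_vars_eq_empty (h : p.vars = ∅) (v : ℕ × ℕ) : VarsBelow p v := by
  simp [VarsBelow, h]

theorem mono (hp : VarsBelow p v) {v' : ℕ × ℕ} (h : toLex v ≤ toLex v') : VarsBelow p v' :=
  fun w hw => (hp w hw).trans_le h

theorem add (hp : VarsBelow p v) (hq : VarsBelow q v) : VarsBelow (p + q) v := by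
  classical
  intro w hw
  rcases Finset.mem_union.mp (vars_add_subset p q hw) with h | h
  exacts [hp w h, hq w h]

theorem sub (hp : VarsBelow p v) (hq : VarsBelow q v) : VarsBelow (p - q) v := by
  classical
  intro w hw
  rcases Finset.mem_union.mp (vars_sub_subset p hw) with h | h
  exacts [hp w h, hq w h]

theorem mul (hp : VarsBelow p v) (hq : VarsBelow q v) : VarsBelow (p * q) v := by
  classical
  intro w hw
  rcases Finset.mem_union.mp (vars_mul p q hw) with h | h
  exacts [hp w h, hq w h]

theorem rename_shift (hp : VarsBelow p v) :
    VarsBelow (rename (fun w : ℕ × ℕ => (w.1 + 1, w.2)) p) (v.1 + 1, v.2) := by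
  classical
  intro w hw
  obtain ⟨w', hw', rfl⟩ := Finset.mem_image.mp (vars_rename _ p hw)
  exact toLex_shift_lt_shift (hp w' hw')

end VarsBelow

theorem varsBelow_X [Nontrivial R] {u v : ℕ × ℕ} (h : toLex u < toLex v) :
    VarsBelow (X u : MvPolynomial (ℕ × ℕ) R) v := by
  simpa [VarsBelow, vars_X] using h

theorem coeff_eq_zero_of_varsBelow {p : MvPolynomial (ℕ × ℕ) R} {v : ℕ × ℕ}
    (hp : VarsBelow p v) {m : (ℕ × ℕ) →₀ ℕ} (hm : m v ≠ 0) : coeff m p = 0 := by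
  by_contra h
  have hv : v ∈ p.vars :=
    (mem_vars_iff_mem_support v).mpr ⟨m, mem_support_iff.mpr h, Finsupp.mem_support_iff.mpr hm⟩
  exact lt_irrefl _ (hp v hv)

namespace HasLeadingVar

variable {p : MvPolynomial (ℕ × ℕ) R} {v : ℕ × ℕ}

theorem varsBelow (hp : HasLeadingVar p v) {v' : ℕ × ℕ} (h : toLex v < toLex v') :
    VarsBelow p v' := by
  obtain ⟨c, s, r, hc, rfl, hs, hr⟩ := hp
  have : Nontrivial R := ⟨⟨c, 0, hc⟩⟩
  refine VarsBelow.add (VarsBelow.mul ?_ (varsBelow_X h)) (hr.mono h.le)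
  intro w hw
  rw [vars_monomial hc] at hw
  exact (hs w hw).trans h

theorem exists_coeff_ne_zero (hp : HasLeadingVar p v) :
    ∃ m : (ℕ × ℕ) →₀ ℕ, m v ≠ 0 ∧ coeff m p ≠ 0 := by
  obtain ⟨c, s, r, hc, rfl, -, hr⟩ := hp
  have hm : (s + Finsupp.single v 1 : (ℕ × ℕ) →₀ ℕ) v ≠ 0 := by simp
  refine ⟨s + Finsupp.single v 1, hm, ?_⟩
  rwa [coeff_add, coeff_eq_zero_of_varsBelow hr hm, add_zero, X, monomial_mul, mul_one,
    coeff_monomial, if_pos rfl]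

/-- The shape of the recursion for `n_{k+1,j+1}`: since `D̄⁻¹` raises every upper index, the term
`-x¹_j D̄⁻¹q` carries the leading variable, the two other terms only lower ones. -/
theorem shift_combination {a b q : MvPolynomial (ℕ × ℕ) R} {u v : ℕ × ℕ}
    (hq : HasLeadingVar q v) (ha : VarsBelow a v) (hb : VarsBelow b (v.1 + 1, v.2))
    (hu : toLex u < toLex (v.1 + 1, v.2)) :
    HasLeadingVar (rename (fun w : ℕ × ℕ => (w.1 + 1, w.2)) a
      - X u * rename (fun w : ℕ × ℕ => (w.1 + 1, w.2)) q + X u * b) (v.1 + 1, v.2) := by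
  classical
  set sh : ℕ × ℕ → ℕ × ℕ := fun w => (w.1 + 1, w.2)
  obtain ⟨c, s, r, hc, rfl, hs, hr⟩ := hq
  have : Nontrivial R := ⟨⟨c, 0, hc⟩⟩
  refine ⟨-c, Finsupp.single u 1 + s.mapDomain sh, rename sh a + X u * b - X u * rename sh r,
    neg_ne_zero.mpr hc, ?_, ?_, ?_⟩
  · have hmono : monomial (Finsupp.single u 1 + s.mapDomain sh) (-c)
        = -(X u * monomial (s.mapDomain sh) c : MvPolynomial (ℕ × ℕ) R) := by
      rw [X, monomial_mul, one_mul, map_neg]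
    simp only [map_add, map_mul, rename_monomial, rename_X, hmono]
    ring
  · intro w hw
    rcases Finset.mem_union.mp (Finsupp.support_add hw) with h | h
    · rw [Finset.mem_singleton.mp (Finsupp.support_single_subset h)]
      exact hu
    · obtain ⟨w', hw', rfl⟩ := Finset.mem_image.mp (Finsupp.mapDomain_support h)
      exact toLex_shift_lt_shift (hs w' hw')
  · exact (ha.rename_shift.add ((varsBelow_X hu).mul hb)).sub
      ((varsBelow_X hu).mul hr.rename_shift)

end HasLeadingVar

theorem hasLeadingVar_prod_X [Nontrivial R] (i j : ℕ) :
    HasLeadingVar (∏ l ∈ Finset.range (j + 1), X (i, l) : MvPolynomial (ℕ × ℕ) R) (i, j) := by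
  classical
  refine ⟨1, ∑ l ∈ Finset.range j, Finsupp.single (i, l) 1, 0, one_ne_zero, ?_, ?_,
    VarsBelow.of_vars_eq_empty vars_0 _⟩
  · rw [Finset.prod_range_succ, monomial_sum_one, add_zero]
    rfl
  · intro w hw
    obtain ⟨l, hl, hw⟩ := Finset.mem_biUnion.mp (Finsupp.support_finsetSum hw)
    rw [Finset.mem_singleton.mp (Finsupp.support_single_subset hw)]
    exact Prod.Lex.toLex_lt_toLex.mpr (.inr ⟨rfl, Finset.mem_range.mp hl⟩)

theorem hasLeadingVar_of_recursion {n : ℕ → ℕ → MvPolynomial (ℕ × ℕ) R}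
    (hcol : ∀ k, (n (k + 1) 0).vars = ∅) (hrow : ∀ j, HasLeadingVar (n 1 (j + 1)) (1, j))
    (hrec : ∀ k j, n (k + 2) (j + 1) =
      rename (fun p : ℕ × ℕ => (p.1 + 1, p.2)) (n (k + 1) j)
        - X (1, j) * rename (fun p : ℕ × ℕ => (p.1 + 1, p.2)) (n (k + 1) (j + 1))
        + X (1, j) * n (k + 2) j) (k j : ℕ) :
    HasLeadingVar (n (k + 1) (j + 1)) (k + 1, j) := by
  have lt_succ (i j : ℕ) : toLex (i, j) < toLex (i, j + 1) :=
    Prod.Lex.toLex_lt_toLex.mpr (.inr ⟨rfl, j.lt_succ_self⟩)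
  induction k generalizing j with
  | zero => exact hrow j
  | succ k ihk =>
    have hprev : ∀ j, VarsBelow (n (k + 1) j) (k + 1, j)
      | 0 => .of_vars_eq_empty (hcol k) _
      | j + 1 => (ihk j).varsBelow (lt_succ _ _)
    have hu : ∀ j, toLex ((1, j) : ℕ × ℕ) < toLex (k + 2, j) := fun j =>
      Prod.Lex.toLex_lt_toLex.mpr (.inl (by omega))
    induction j with
    | zero =>
      rw [hrec]
      exact (ihk 0).shift_combination (hprev 0) (.of_vars_eq_empty (hcol (k + 1)) _) (hu 0)
    | succ j ihj =>
      rw [hrec]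
      exact (ihk (j + 1)).shift_combination (hprev (j + 1)) (ihj.varsBelow (lt_succ _ _)) (hu _)

theorem linearIndependent_of_hasLeadingVar {ι : Type*} [LinearOrder ι] [NoZeroDivisors R]
    {p : ι → MvPolynomial (ℕ × ℕ) R} {v : ι → ℕ × ℕ} (hv : StrictMono fun i => toLex (v i))
    (hp : ∀ i, HasLeadingVar (p i) (v i)) : LinearIndependent R p :=
  linearIndependent_of_triangular fun i => by
    obtain ⟨m, hmv, hm⟩ := (hp i).exists_coeff_ne_zero
    exact ⟨lcoeff R m, hm, fun j hj => coeff_eq_zero_of_varsBelow ((hp j).varsBelow (hv hj)) hmv⟩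

end MvPolynomial

theorem stmt19
    (n : ℕ → ℕ → MvPolynomial (ℕ × ℕ) ℝ)
    (hn10 : n 1 0 = 1)
    (hn1 : ∀ j, n 1 (j+1) = ∏ l ∈ Finset.range (j+1), X ((1 : ℕ), l))
    (hn0 : ∀ k, n (k+2) 0 = 0)
    (hnrec : ∀ k j, n (k+2) (j+1) =
      rename (fun p : ℕ × ℕ => (p.1 + 1, p.2)) (n (k+1) j)
        - X ((1 : ℕ), j) * rename (fun p : ℕ × ℕ => (p.1 + 1, p.2)) (n (k+1) (j+1))
        + X ((1 : ℕ), j) * n (k+2) j) :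
    (∀ k j : ℕ, ∃ (c : ℝ) (s : (ℕ × ℕ) →₀ ℕ) (r : MvPolynomial (ℕ × ℕ) ℝ),
      c ≠ 0 ∧
      n (k+1) (j+1) = (monomial s c) * X (k+1, j) + r ∧
      (∀ v ∈ s.support, toLex v < toLex ((k+1 : ℕ), j)) ∧
      (∀ v ∈ r.vars, toLex v < toLex ((k+1 : ℕ), j))) ∧
    LinearIndependent ℝ (fun k : ℕ => (fun j : ℕ => n (k+1) j : ℕ → MvPolynomial (ℕ × ℕ) ℝ)) := by
  have hcol : ∀ k, (n (k + 1) 0).vars = ∅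
    | 0 => by rw [hn10, vars_one]
    | k + 1 => by rw [hn0, vars_0]
  have hlead := hasLeadingVar_of_recursion hcol (fun j => hn1 j ▸ hasLeadingVar_prod_X 1 j) hnrec
  refine ⟨hlead, ?_⟩
  have hv : StrictMono fun k : ℕ => toLex (k + 1, 0) := fun a b hab =>
    Prod.Lex.toLex_lt_toLex.mpr (.inl (Nat.succ_lt_succ hab))
  exact (linearIndependent_of_hasLeadingVar hv fun k => hlead k 0).of_comp (LinearMap.proj 1)
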